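/- Let P = (R, F) be a ProbLog program over atoms ℕ such that the dependency relation of R is well-founded and no fact atom of F is the head of any clause of R. Let X : Finset ℕ and x : ℕ → Bool, let R_x be the sublist of R of clauses with head not in X (the intervened program, in which the atoms of X become external), and let S(P) be the SWIFT transformation of P. Then (i) the dependency relation of the clause list of S(P) is well-founded; and (ii) for every assignment ε : ℕ → Bool, if m is the supported model of the clause list of S(P) extending the assignment sending Sum.inl a to ε a and Sum.inr a to x a, and m_x is the supported model of R_x extending the assignment sending a to x a when a ∈ X and to ε a otherwise, then m (Sum.inl a) = m_x a for every atom a ∉ X, and m (Sum.inr a) = x a for every a ∈ X. -/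

import Mathlib

/-- A clause: a head atom together with a body list of literals (atom, sign). -/
abbrev Clause (V : Type) := V × List (V × Bool)

/-- The dependency relation of a clause list: `Dep R a h` holds iff `a` is the
atom of some body literal of a clause of `R` with head `h`. -/
def Dep {V : Type} (R : List (Clause V)) (a h : V) : Prop :=
  ∃ c ∈ R, c.1 = h ∧ a ∈ c.2.map Prod.fst

/-- `f` is a supported model of `R` extending `e`. -/
def IsSupportedModel {V : Type} (R : List (Clause V)) (e f : V → Bool) : Prop :=
  (∀ a : V, (∀ c ∈ R, c.1 ≠ a) → f a = e a) ∧
  (∀ h : V, (∃ c ∈ R, c.1 = h) →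
    (f h = true ↔ ∃ c ∈ R, c.1 = h ∧ ∀ l ∈ c.2, f l.1 = l.2))

/-- The clauses of the SWIFT transformation. -/
def swiftClauses (X : Finset ℕ) (R : List (Clause ℕ)) : List (Clause (ℕ ⊕ ℕ)) :=
  (R.filter fun c => decide (c.1 ∉ X)).map fun c =>
    ((Sum.inl c.1 : ℕ ⊕ ℕ),
      c.2.map fun l =>
        if l.1 ∈ X then ((Sum.inr l.1 : ℕ ⊕ ℕ), l.2) else ((Sum.inl l.1 : ℕ ⊕ ℕ), l.2))

/-!
The SWIFT clauses are the intervened program `R_x` with every atom `a` renamed to `inr a` if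
`a ∈ X` and to `inl a` otherwise; heads are never in `X`, so they become `inl h`. Renaming
along an injective map preserves well-foundedness of the dependency relation and pulls
supported models back to supported models, and a program with well-founded dependencies has
at most one supported model extending a given assignment (by well-founded induction on atoms).
-/

variable {V W : Type}

def Clause.rename (ρ : V → W) (c : Clause V) : Clause W :=
  (ρ c.1, c.2.map fun l => (ρ l.1, l.2))

lemma Dep.mono {R S : List (Clause V)} (hRS : R ⊆ S) {a h : V} (hd : Dep R a h) : Dep S a h :=
  let ⟨c, hc, hch, ha⟩ := hd
  ⟨c, hRS hc, hch, ha⟩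

lemma Dep.exists_of_map_rename {R : List (Clause V)} {ρ : V → W} {a' h' : W}
    (hd : Dep (R.map (Clause.rename ρ)) a' h') : ∃ a h, Dep R a h ∧ ρ a = a' ∧ ρ h = h' := by
  obtain ⟨_, hc', rfl, ha⟩ := hd
  obtain ⟨c, hc, rfl⟩ := List.mem_map.1 hc'
  simp only [Clause.rename, List.map_map, List.mem_map, Function.comp_def] at ha
  obtain ⟨l, hl, rfl⟩ := ha
  exact ⟨l.1, c.1, ⟨c, hc, rfl, List.mem_map_of_mem hl⟩, rfl, rfl⟩

lemma wellFounded_dep_map_rename {R : List (Clause V)} {ρ : V → W}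
    (hρ : Function.Injective ρ) (hwf : WellFounded (Dep R)) :
    WellFounded (Dep (R.map (Clause.rename ρ))) := by
  have hacc : ∀ h, Acc (Dep (R.map (Clause.rename ρ))) (ρ h) := fun h =>
    hwf.induction h fun h ih => Acc.intro _ fun _ hd => by
      obtain ⟨a, h₀, hdep, rfl, hh⟩ := hd.exists_of_map_rename
      exact ih a (hρ hh ▸ hdep)
  refine ⟨fun y => ⟨y, fun z hz => ?_⟩⟩
  obtain ⟨a, _, _, rfl, _⟩ := hz.exists_of_map_rename
  exact hacc a

lemma IsSupportedModel.comp_rename {R : List (Clause V)} {ρ : V → W} {e f : W → Bool}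
    (hρ : Function.Injective ρ) (hf : IsSupportedModel (R.map (Clause.rename ρ)) e f) :
    IsSupportedModel R (e ∘ ρ) (f ∘ ρ) := by
  refine ⟨fun a ha => hf.1 (ρ a) ?_, fun h hh => ?_⟩
  · simp only [List.mem_map, Clause.rename]
    rintro _ ⟨c, hc, rfl⟩ hca
    exact ha c hc (hρ hca)
  · obtain ⟨c, hc, rfl⟩ := hh
    rw [Function.comp_apply, hf.2 (ρ c.1) ⟨_, List.mem_map_of_mem hc, rfl⟩]
    constructor
    · rintro ⟨_, hd', hhead, hbody⟩
      obtain ⟨d, hd, rfl⟩ := List.mem_map.1 hd'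
      exact ⟨d, hd, hρ hhead, List.forall_mem_map.1 hbody⟩
    · rintro ⟨d, hd, hhead, hbody⟩
      exact ⟨_, List.mem_map_of_mem hd, congrArg ρ hhead, List.forall_mem_map.2 hbody⟩

lemma IsSupportedModel.unique {R : List (Clause V)} {e f g : V → Bool}
    (hwf : WellFounded (Dep R)) (hf : IsSupportedModel R e f) (hg : IsSupportedModel R e g) :
    f = g := by
  funext a
  induction a using hwf.induction with
  | _ a ih =>
    by_cases hhead : ∃ c ∈ R, c.1 = a
    · have hbody : ∀ c ∈ R, c.1 = a → ∀ l ∈ c.2, f l.1 = g l.1 := fun c hc hca l hl =>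
        ih l.1 ⟨c, hc, hca, List.mem_map_of_mem hl⟩
      rw [Bool.eq_iff_iff, hf.2 a hhead, hg.2 a hhead]
      refine exists_congr fun c => and_congr_right fun hc => and_congr_right fun hca => ?_
      exact forall₂_congr fun l hl => by rw [hbody c hc hca l hl]
    · push Not at hhead
      rw [hf.1 a hhead, hg.1 a hhead]

def swiftAtom (X : Finset ℕ) (a : ℕ) : ℕ ⊕ ℕ :=
  if a ∈ X then Sum.inr a else Sum.inl a

lemma swiftAtom_injective (X : Finset ℕ) : Function.Injective (swiftAtom X) := by
  intro a b hab
  unfold swiftAtom at hab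
  split_ifs at hab <;> simpa using hab

lemma swiftClauses_eq_map_rename (X : Finset ℕ) (R : List (Clause ℕ)) :
    swiftClauses X R = (R.filter fun c => decide (c.1 ∉ X)).map (Clause.rename (swiftAtom X)) := by
  refine List.map_congr_left fun c hc => ?_
  have hcX : c.1 ∉ X := by simpa using (List.mem_filter.1 hc).2
  simp only [Clause.rename, swiftAtom, if_neg hcX]
  congr 2
  funext l
  split_ifs <;> rfl

theorem swip_world_level_correctness_general (R : List (Clause ℕ))
    (hwf : WellFounded (Dep R))
    (X : Finset ℕ) (x : ℕ → Bool) :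
    WellFounded (Dep (swiftClauses X R)) ∧
    ∀ (ε : ℕ → Bool) (m : ℕ ⊕ ℕ → Bool) (mx : ℕ → Bool),
      IsSupportedModel (swiftClauses X R) (Sum.elim ε x) m →
      IsSupportedModel (R.filter fun c => decide (c.1 ∉ X))
        (fun a => if a ∈ X then x a else ε a) mx →
      (∀ a ∉ X, m (Sum.inl a) = mx a) ∧ (∀ a ∈ X, m (Sum.inr a) = x a) := by
  have hwfx : WellFounded (Dep (R.filter fun c => decide (c.1 ∉ X))) :=
    Subrelation.wf (Dep.mono (List.filter_subset_self _)) hwf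
  rw [swiftClauses_eq_map_rename]
  refine ⟨wellFounded_dep_map_rename (swiftAtom_injective X) hwfx, fun ε m mx hm hmx => ?_⟩
  have hpull : m ∘ swiftAtom X = mx := by
    refine (IsSupportedModel.comp_rename (swiftAtom_injective X) hm).unique hwfx ?_
    convert hmx using 2 with a
    by_cases ha : a ∈ X <;> simp [swiftAtom, ha]
  refine ⟨fun a ha => by simp [← hpull, swiftAtom, ha], fun a ha => ?_⟩
  have hnohead : ∀ c ∈ R.filter fun c => decide (c.1 ∉ X), c.1 ≠ a := fun c hc hca => by
    simp_all
  simpa [← hpull, swiftAtom, ha] using hmx.1 a hnohead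

theorem swip_world_level_correctness (R : List (Clause ℕ)) (F : List (ℕ × ℝ))
    (hwf : WellFounded (Dep R))
    (hfact : ∀ f ∈ F, ∀ c ∈ R, c.1 ≠ f.1)
    (X : Finset ℕ) (x : ℕ → Bool) :
    WellFounded (Dep (swiftClauses X R)) ∧
    ∀ (ε : ℕ → Bool) (m : ℕ ⊕ ℕ → Bool) (mx : ℕ → Bool),
      IsSupportedModel (swiftClauses X R) (Sum.elim ε x) m →
      IsSupportedModel (R.filter fun c => decide (c.1 ∉ X))
        (fun a => if a ∈ X then x a else ε a) mx →
      (∀ a ∉ X, m (Sum.inl a) = mx a) ∧ (∀ a ∈ X, m (Sum.inr a) = x a) :=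
  swip_world_level_correctness_general R hwf X x
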